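/- arXiv:1308.1745 — 2 statements merged into one kernel-verified Lean document; each statement's English description precedes it below -/
import Mathlib

section
/- Fix p ∈ (0,1) and total rate b > 0. Consider splitting the packet into J equal descriptions, each of length b/J, with independent success events each of probability p^{b/J}. The probability that at least one description is received, 1 - (1 - p^{b/J})^J, is strictly increasing in J ∈ {1,2,3,...}. -/
/-! Write `q J = 1 - p ^ (b / J) ∈ (0, 1)` for the probability that one description of length
`b / J` is lost. Shorter descriptions are lost less often, so `q J' < q J` when `J < J'`, and then
`q J' ^ J' < q J' ^ J < q J ^ J`: losing all `J'` descriptions is less likely than losing all `J`. -/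

theorem pow_lt_pow_of_lt_of_lt_one {M₀ : Type*} [MonoidWithZero M₀] [PartialOrder M₀]
    [PosMulStrictMono M₀] [MulPosMono M₀] {a b : M₀} {m n : ℕ}
    (ha₀ : 0 < a) (ha₁ : a < 1) (hab : a < b) (hm : m ≠ 0) (hmn : m < n) : a ^ n < b ^ m :=
  (pow_lt_pow_right_of_lt_one₀ ha₀ ha₁ hmn).trans (pow_lt_pow_left₀ hab ha₀.le hm)

theorem Real.rpow_div_natCast_lt_rpow_div_natCast {p b : ℝ} (hp₀ : 0 < p) (hp₁ : p < 1)
    (hb : 0 < b) {m n : ℕ} (hm : 0 < m) (hmn : m < n) : p ^ (b / m) < p ^ (b / n) :=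
  Real.rpow_lt_rpow_of_exponent_gt hp₀ hp₁
    (div_lt_div_of_pos_left hb (Nat.cast_pos.2 hm) (Nat.cast_lt.2 hmn))

/-- Splitting a fixed total rate b into J equal descriptions, each received
independently with probability p^{b/J}, the probability 1 - (1 - p^{b/J})^J
that at least one description is received is strictly increasing in J. -/
theorem mdc_split_reliability_strict_mono
    (p b : ℝ) (hp0 : 0 < p) (hp1 : p < 1) (hb : 0 < b) :
    ∀ J J' : ℕ, 1 ≤ J → J < J' →
      1 - (1 - p ^ (b / J)) ^ J < 1 - (1 - p ^ (b / J')) ^ J' := by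
  intro J J' hJ hJJ'
  have hloss_pos : 0 < 1 - p ^ (b / J') :=
    sub_pos.2 (Real.rpow_lt_one hp0.le hp1 (div_pos hb (Nat.cast_pos.2 (hJ.trans hJJ'.le))))
  have hloss_lt_one : 1 - p ^ (b / J') < 1 := sub_lt_self 1 (Real.rpow_pos_of_pos hp0 _)
  have hloss_lt : 1 - p ^ (b / J') < 1 - p ^ (b / J) :=
    sub_lt_sub_left (Real.rpow_div_natCast_lt_rpow_div_natCast hp0 hp1 hb hJ hJJ') 1
  have hall_lost := pow_lt_pow_of_lt_of_lt_one hloss_pos hloss_lt_one hloss_lt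
    (Nat.one_le_iff_ne_zero.1 hJ) hJJ'
  linarith
end

section
/- For p ∈ (0,1) fixed, the function J ↦ (1 - p^{1/J})^J on positive integers J is strictly decreasing; equivalently, the probability 1 - (1-p^{1/J})^J of receiving at least one of J independent descriptions, each succeeding with probability p^{1/J}, is strictly increasing in J. -/
/-!
Taking logarithms, the claim is that `x ↦ log (1 - p ^ x) / x` is strictly increasing on `x > 0`
(evaluated at `x = 1 / J`). Substituting `q = p ^ x`, so that `x = log q / log p`, this function is
`log p * (log (1 - q) / log q)`. As `q` increases in `(0, 1)`, `-log (1 - q)` increases and `-log q`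
decreases, so `log (1 - q) / log q` increases; since `q = p ^ x` decreases in `x` and `log p < 0`,
the two sign reversals cancel.
-/

open Real Set

lemma log_one_sub_div_log_strictMonoOn :
    StrictMonoOn (fun q : ℝ => log (1 - q) / log q) (Ioo 0 1) := by
  rintro a ⟨ha0, ha1⟩ b ⟨hb0, hb1⟩ hab
  have hnum : -log (1 - a) < -log (1 - b) := neg_lt_neg (log_lt_log (by linarith) (by linarith))
  have hden : -log b ≤ -log a := neg_le_neg (log_le_log ha0 hab.le)
  have hnum_nonneg : 0 ≤ -log (1 - b) := neg_nonneg.mpr (log_nonpos (by linarith) (by linarith))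
  have hden_pos : 0 < -log b := neg_pos.mpr (log_neg hb0 hb1)
  simpa only [neg_div_neg_eq] using div_lt_div₀ hnum hden hnum_nonneg hden_pos

lemma rpow_mem_Ioo_zero_one {p x : ℝ} (hp0 : 0 < p) (hp1 : p < 1) (hx : 0 < x) :
    p ^ x ∈ Ioo 0 1 :=
  ⟨rpow_pos_of_pos hp0 x, rpow_lt_one hp0.le hp1 hx⟩

lemma log_one_sub_rpow_div_strictMonoOn {p : ℝ} (hp0 : 0 < p) (hp1 : p < 1) :
    StrictMonoOn (fun x : ℝ => log (1 - p ^ x) / x) (Ioi 0) := by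
  have hlogp : log p < 0 := log_neg hp0 hp1
  have hsubst : ∀ x : ℝ, 0 < x → log (1 - p ^ x) / x = log p * (log (1 - p ^ x) / log (p ^ x)) := by
    intro x hx
    rw [log_rpow hp0]
    field_simp [hlogp.ne]
  intro x hx y hy hxy
  simp only [hsubst x hx, hsubst y hy]
  exact mul_lt_mul_of_neg_left
    (log_one_sub_div_log_strictMonoOn (rpow_mem_Ioo_zero_one hp0 hp1 hy)
      (rpow_mem_Ioo_zero_one hp0 hp1 hx) (rpow_lt_rpow_of_exponent_gt hp0 hp1 hxy))
    hlogp

/-- For fixed p ∈ (0,1), J ↦ (1 - p^{1/J})^J is strictly decreasing on the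
positive integers; equivalently the probability 1 - (1-p^{1/J})^J of receiving
at least one of J independent descriptions, each succeeding with probability
p^{1/J}, is strictly increasing in J. -/
theorem mdc_reliability_strict_mono (p : ℝ) (hp0 : 0 < p) (hp1 : p < 1) :
    ∀ J J' : ℕ, 1 ≤ J → J < J' →
      (1 - p ^ ((1:ℝ) / J')) ^ J' < (1 - p ^ ((1:ℝ) / J)) ^ J ∧
      1 - (1 - p ^ ((1:ℝ) / J)) ^ J < 1 - (1 - p ^ ((1:ℝ) / J')) ^ J' := by
  intro J J' hJ hJJ'
  have hJpos : (0 : ℝ) < J := by exact_mod_cast hJ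
  have hJ'pos : (0 : ℝ) < J' := by exact_mod_cast Nat.zero_lt_of_lt hJJ'
  have hbase : ∀ n : ℕ, (0 : ℝ) < n → 0 < 1 - p ^ ((1:ℝ) / n) := fun n hn =>
    sub_pos.mpr (rpow_mem_Ioo_zero_one hp0 hp1 (one_div_pos.mpr hn)).2
  have hlog : J' * log (1 - p ^ ((1:ℝ) / J')) < J * log (1 - p ^ ((1:ℝ) / J)) := by
    simpa only [div_div_eq_mul_div, div_one, mul_comm] using
      log_one_sub_rpow_div_strictMonoOn hp0 hp1 (one_div_pos.mpr hJ'pos) (one_div_pos.mpr hJpos)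
        (one_div_lt_one_div_of_lt hJpos (by exact_mod_cast hJJ'))
  have hpow : (1 - p ^ ((1:ℝ) / J')) ^ J' < (1 - p ^ ((1:ℝ) / J)) ^ J := by
    rw [← log_lt_log_iff (pow_pos (hbase J' hJ'pos) J') (pow_pos (hbase J hJpos) J),
      log_pow, log_pow]
    exact hlog
  exact ⟨hpow, by linarith⟩
end
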